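/- arXiv:2507.06318 — 2 statements merged into one kernel-verified Lean document; each statement's English description precedes it below -/
import Mathlib

section
/- Under the same hypotheses (two anticommuting square-zero degree-1 differentials D, D' on a graded complex vector space satisfying the DD'-lemma), the inclusion of the subcomplex Z•_{D'} = ker D' (with differential D) into (A•, D) is a quasi-isomorphism: it induces an isomorphism on D-cohomology in every degree. -/
/-- the inclusion `(ker D', D) ↪ (A, D)` is a quasi-isomorphism:
it is surjective and injective on `D`-cohomology. -/
theorem inclusion_quasi_iso (A : Type*) [AddCommGroup A] [Module ℂ A]
    (D D' : A →ₗ[ℂ] A)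
    (hD : D ∘ₗ D = 0) (hD' : D' ∘ₗ D' = 0)
    (hanti : D ∘ₗ D' = - (D' ∘ₗ D))
    (ddp : ∀ α : A, D α = 0 → D' α = 0 →
      ((∃ β, α = D β) ∨ (∃ β, α = D' β)) → ∃ γ, α = D (D' γ)) :
    -- surjectivity on D-cohomology: every D-closed α is D-cohomologous to a D'-closed element
    (∀ α : A, D α = 0 → ∃ z : A, D' z = 0 ∧ ∃ β : A, α - z = D β) ∧
    -- injectivity on D-cohomology: a D'-closed element that is D-exact in A
    -- is the image under D of a D'-closed element
    (∀ z : A, D' z = 0 → (∃ β : A, z = D β) → ∃ γ : A, D' γ = 0 ∧ z = D γ) := by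
  have hDD : ∀ x : A, D (D x) = 0 := fun x => DFunLike.congr_fun hD x
  have hD'D' : ∀ x : A, D' (D' x) = 0 := fun x => DFunLike.congr_fun hD' x
  have hantif : ∀ x : A, D (D' x) = - D' (D x) := fun x => DFunLike.congr_fun hanti x
  constructor
  · intro α hα
    have h1 : D (D' α) = 0 := by rw [hantif, hα, map_zero, neg_zero]
    obtain ⟨γ, hγ⟩ := ddp (D' α) h1 (hD'D' α) (Or.inr ⟨α, rfl⟩)
    refine ⟨α + D γ, ?_, -γ, ?_⟩
    · rw [map_add, hγ]
      have := hantif γ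
      rw [show D' (D γ) = - D (D' γ) by rw [hantif]; abel]
      abel
    · rw [map_neg]; abel
  · intro z hz ⟨β, hβ⟩
    have hzc : D z = 0 := by rw [hβ, hDD]
    obtain ⟨γ, hγ⟩ := ddp z hzc hz (Or.inl ⟨β, hβ⟩)
    exact ⟨D' γ, hD'D' γ, hγ⟩
end

section
/- Under the same hypotheses (two anticommuting square-zero degree-1 differentials D, D' satisfying the DD'-lemma), the quotient map from the subcomplex (ker D', D) to the D'-cohomology H•_{D'}(A) equipped with the zero differential is a map of complexes and a quasi-isomorphism. -/
/-- the quotient map `(ker D', D) → (H_{D'}(A), 0)` is a chain map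
and a quasi-isomorphism. -/
theorem quotient_to_Dprime_cohomology_quasi_iso (A : Type*) [AddCommGroup A] [Module ℂ A]
    (D D' : A →ₗ[ℂ] A)
    (hD : D ∘ₗ D = 0) (hD' : D' ∘ₗ D' = 0)
    (hanti : D ∘ₗ D' = - (D' ∘ₗ D))
    (ddp : ∀ α : A, D α = 0 → D' α = 0 →
      ((∃ β, α = D β) ∨ (∃ β, α = D' β)) → ∃ γ, α = D (D' γ)) :
    -- chain map (target has zero differential): for z ∈ ker D', D z is D'-exact
    (∀ z : A, D' z = 0 → ∃ β : A, D z = D' β) ∧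
    -- surjectivity on cohomology: every class in H_{D'} has a representative
    -- which lies in ker D' and is D-closed
    (∀ α : A, D' α = 0 → ∃ z : A, D' z = 0 ∧ D z = 0 ∧ ∃ β : A, α - z = D' β) ∧
    -- injectivity on cohomology: a D-closed element of ker D' that is D'-exact
    -- is D-exact within ker D'
    (∀ z : A, D' z = 0 → D z = 0 → (∃ β : A, z = D' β) →
      ∃ w : A, D' w = 0 ∧ z = D w) := by
  have hDD : ∀ x, D (D x) = 0 := fun x => by
    have := LinearMap.congr_fun hD x; simpa using this
  have hD'D' : ∀ x, D' (D' x) = 0 := fun x => by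
    have := LinearMap.congr_fun hD' x; simpa using this
  have hA : ∀ x, D (D' x) = - D' (D x) := fun x => by
    have := LinearMap.congr_fun hanti x; simpa using this
  refine ⟨?_, ?_, ?_⟩
  · intro z hz
    obtain ⟨γ, hγ⟩ := ddp (D z) (hDD z) (by have h := hA z; rw [hz, map_zero] at h; exact neg_eq_zero.mp h.symm) (Or.inl ⟨z, rfl⟩)
    exact ⟨-D γ, by rw [hγ, hA, map_neg]⟩
  · intro α hα
    obtain ⟨γ, hγ⟩ := ddp (D α) (hDD α) (by have h := hA α; rw [hα, map_zero] at h; exact neg_eq_zero.mp h.symm) (Or.inl ⟨α, rfl⟩)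
    refine ⟨α - D' γ, by rw [map_sub, hα, hD'D', sub_zero], ?_, γ, by abel⟩
    rw [map_sub, hγ, sub_self]
  · intro z hz' hz hex
    obtain ⟨γ, hγ⟩ := ddp z hz hz' (Or.inr hex)
    exact ⟨D' γ, hD'D' γ, hγ⟩
end
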